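/- arXiv:2405.14682 — 6 statements merged into one kernel-verified Lean document; each statement's English description precedes it below -/
import Mathlib

section
/- Let c₀, c₁, c₂ be real numbers with c₂ < 0, and consider the cubic polynomial p(λ) = λ³ − c₂λ² + c₁λ − c₀ over ℂ. Then all three complex roots of p have negative real part if and only if c₁ > 0, c₀ < 0 and c₂c₁ < c₀. -/
/-!
A real cubic has a real root `r`, so `p = (X - r)(X² + aX + b)` with `a, b` real, and the roots
of `p` have negative real parts iff `r < 0` and `a, b > 0`. For the quadratic factor this is
Vieta: its roots satisfy `w₁ + w₂ = -a`, `w₁ w₂ = b`, so `Im w₂ = -Im w₁` and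
`b = Re w₁ Re w₂ + (Im w₁)²`. Finally `c₂ c₁ - c₀ = -a (c₁ + r²)`, which translates
`r < 0, a > 0, b > 0` into `c₁ > 0, c₀ < 0, c₂ c₁ < c₀`.
-/

open Polynomial Filter

theorem Polynomial.exists_isRoot_of_odd_natDegree_real {P : ℝ[X]} (hP : Odd P.natDegree) :
    ∃ x, P.IsRoot x := by
  wlog hlc : 0 < P.leadingCoeff generalizing P
  · have hlc' : P.leadingCoeff ≠ 0 := leadingCoeff_ne_zero.mpr (by rintro rfl; simp at hP)
    obtain ⟨x, hx⟩ := this (P := -P) (by simpa using hP)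
      (by rw [leadingCoeff_neg]; exact neg_pos.mpr (lt_of_le_of_ne (not_lt.mp hlc) hlc'))
    exact ⟨x, by simpa using hx⟩
  have hdeg : 0 < P.degree := natDegree_pos_iff_degree_pos.mp hP.pos
  have hpow : Tendsto (fun x : ℝ => x ^ P.natDegree) atBot atBot := by
    refine (tendsto_neg_atTop_atBot.comp
      ((tendsto_pow_atTop hP.pos.ne').comp tendsto_neg_atBot_atTop)).congr fun x => ?_
    simp [hP.neg_pow]
  have htop := P.tendsto_atTop_of_leadingCoeff_nonneg hdeg hlc.le
  have hbot := P.isEquivalent_atBot_lead.symm.tendsto_atBot (hpow.const_mul_atBot hlc)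
  exact P.continuous.surjective htop hbot 0

theorem X_sub_C_mul_quadratic {R : Type*} [CommRing R] (r a b : R) :
    (X - C r) * (X ^ 2 + C a * X + C b) =
      X ^ 3 - C (r - a) * X ^ 2 + C (b - r * a) * X - C (r * b) := by
  simp only [map_sub, map_mul]
  ring

/-- The coefficient form of a factorization `X³ - c₂X² + c₁X - c₀ = (X - r)(X² + aX + b)`
over `ℝ`. -/
theorem exists_cubic_coeffs_eq_factor_coeffs (c₀ c₁ c₂ : ℝ) :
    ∃ r a b : ℝ, c₂ = r - a ∧ c₁ = b - r * a ∧ c₀ = r * b := by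
  have hdeg : (X ^ 3 - C c₂ * X ^ 2 + C c₁ * X - C c₀).natDegree = 3 := by compute_degree!
  obtain ⟨r, hr⟩ := exists_isRoot_of_odd_natDegree_real (by rw [hdeg]; decide)
  refine ⟨r, r - c₂, c₁ + r * (r - c₂), by ring, by ring, ?_⟩
  simp only [IsRoot.def, eval_sub, eval_add, eval_pow, eval_X, eval_mul, eval_C] at hr
  linear_combination -hr

theorem re_neg_of_add_eq_of_mul_eq {w₁ w₂ : ℂ} {a b : ℝ} (hsum : w₁ + w₂ = -a)
    (hprod : w₁ * w₂ = b) (ha : 0 < a) (hb : 0 < b) : w₁.re < 0 := by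
  have hre := congrArg Complex.re hsum
  have him := congrArg Complex.im hsum
  have hpre := congrArg Complex.re hprod
  have hpim := congrArg Complex.im hprod
  simp only [Complex.add_re, Complex.add_im, Complex.mul_re, Complex.mul_im, Complex.neg_re,
    Complex.neg_im, Complex.ofReal_re, Complex.ofReal_im, neg_zero] at hre him hpre hpim
  have hy : w₂.im = -w₁.im := by linarith
  rw [hy] at hpre hpim
  by_contra! h
  have hx₂ : w₂.re < 0 := by linarith
  -- `Im (w₁ w₂) = 0` kills the `(Im w₁)²` term, and then the two sides have opposite signs.
  have key : b * (w₁.re - w₂.re) = w₁.re * w₂.re * (w₁.re - w₂.re) := by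
    linear_combination (w₂.re - w₁.re) * hpre - w₁.im * hpim
  nlinarith [mul_pos hb (show 0 < w₁.re - w₂.re by linarith),
    mul_nonpos_of_nonneg_of_nonpos h hx₂.le]

theorem re_neg_and_re_neg_iff_of_add_eq_of_mul_eq {w₁ w₂ : ℂ} {a b : ℝ}
    (hsum : w₁ + w₂ = -a) (hprod : w₁ * w₂ = b) : w₁.re < 0 ∧ w₂.re < 0 ↔ 0 < a ∧ 0 < b := by
  refine ⟨fun ⟨h₁, h₂⟩ => ?_, fun ⟨ha, hb⟩ => ⟨re_neg_of_add_eq_of_mul_eq hsum hprod ha hb,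
    re_neg_of_add_eq_of_mul_eq (add_comm w₁ w₂ ▸ hsum) (mul_comm w₁ w₂ ▸ hprod) ha hb⟩⟩
  have hre := congrArg Complex.re hsum
  have him := congrArg Complex.im hsum
  have hpre := congrArg Complex.re hprod
  simp only [Complex.add_re, Complex.add_im, Complex.mul_re, Complex.neg_re, Complex.neg_im,
    Complex.ofReal_re, Complex.ofReal_im, neg_zero] at hre him hpre
  have hy : w₂.im = -w₁.im := by linarith
  rw [hy] at hpre
  exact ⟨by linarith, by nlinarith [sq_nonneg w₁.im, mul_pos_of_neg_of_neg h₁ h₂]⟩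

theorem quadratic_roots_re_neg_iff (a b : ℝ) :
    (∀ w ∈ (X ^ 2 + C (a : ℂ) * X + C (b : ℂ)).roots, w.re < 0) ↔ 0 < a ∧ 0 < b := by
  have hdeg : (X ^ 2 + C (a : ℂ) * X + C (b : ℂ)).natDegree = 2 := by compute_degree!
  obtain ⟨w₁, w₂, hroots⟩ :=
    Multiset.card_eq_two.mp (IsAlgClosed.card_roots_eq_natDegree.trans hdeg)
  rw [← one_mul (X ^ 2), ← C_1] at hroots
  obtain ⟨hsum, hprod⟩ := (roots_quadratic_eq_pair_iff_of_ne_zero one_ne_zero).mp hroots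
  rw [← one_mul (X ^ 2), ← C_1, hroots]
  simp only [Multiset.insert_eq_cons, Multiset.mem_cons, Multiset.mem_singleton,
    forall_eq_or_imp, forall_eq]
  exact re_neg_and_re_neg_iff_of_add_eq_of_mul_eq (by linear_combination hsum)
    (by linear_combination -hprod)

theorem factor_signs_iff_hurwitz {c₀ c₁ c₂ r a b : ℝ} (h₂ : c₂ = r - a) (h₁ : c₁ = b - r * a)
    (h₀ : c₀ = r * b) : (r < 0 ∧ 0 < a ∧ 0 < b) ↔ (0 < c₁ ∧ c₀ < 0 ∧ c₂ * c₁ < c₀) := by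
  have key : c₂ * c₁ - c₀ = -a * (c₁ + r ^ 2) := by subst h₂ h₀; rw [h₁]; ring
  constructor
  · rintro ⟨hr, ha, hb⟩
    have hc₁ : 0 < c₁ := by nlinarith
    exact ⟨hc₁, by nlinarith, by nlinarith [sq_nonneg r]⟩
  · rintro ⟨hc₁, hc₀, hc⟩
    have ha : 0 < a := by nlinarith [sq_nonneg r]
    have hr : r < 0 := by
      by_contra! hr
      nlinarith
    exact ⟨hr, ha, by nlinarith⟩

theorem cubic_all_roots_negative_real_part_iff_general
    (c₀ c₁ c₂ : ℝ) :
    (∀ z ∈ (X ^ 3 - C (c₂ : ℂ) * X ^ 2 + C (c₁ : ℂ) * X - C (c₀ : ℂ)).roots,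
        z.re < 0) ↔ (0 < c₁ ∧ c₀ < 0 ∧ c₂ * c₁ < c₀) := by
  obtain ⟨r, a, b, h₂, h₁, h₀⟩ := exists_cubic_coeffs_eq_factor_coeffs c₀ c₁ c₂
  have hquad : (X ^ 2 + C (a : ℂ) * X + C (b : ℂ)) ≠ 0 := by
    apply Monic.ne_zero
    monicity!
  have hfactor : X ^ 3 - C (c₂ : ℂ) * X ^ 2 + C (c₁ : ℂ) * X - C (c₀ : ℂ) =
      (X - C (r : ℂ)) * (X ^ 2 + C (a : ℂ) * X + C (b : ℂ)) := by
    rw [X_sub_C_mul_quadratic, h₂, h₁, h₀]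
    push_cast
    rfl
  rw [hfactor, roots_mul (mul_ne_zero (X_sub_C_ne_zero _) hquad), roots_X_sub_C,
    Multiset.singleton_add, Multiset.forall_mem_cons, Complex.ofReal_re,
    quadratic_roots_re_neg_iff]
  exact factor_signs_iff_hurwitz h₂ h₁ h₀

theorem cubic_all_roots_negative_real_part_iff
    (c₀ c₁ c₂ : ℝ) (hc₂ : c₂ < 0) :
    (∀ z ∈ (X ^ 3 - C (c₂ : ℂ) * X ^ 2 + C (c₁ : ℂ) * X - C (c₀ : ℂ)).roots,
        z.re < 0) ↔ (0 < c₁ ∧ c₀ < 0 ∧ c₂ * c₁ < c₀) :=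
  cubic_all_roots_negative_real_part_iff_general c₀ c₁ c₂
end

section
/- Let c₀, c₁, c₂ be real numbers with c₂ < 0, and consider the cubic polynomial p(λ) = λ³ − c₂λ² + c₁λ − c₀ over ℂ. Then the multiset of three complex roots of p consists of two roots with negative real part and one root that is real and positive if and only if c₀ > 0. -/
open Polynomial Filter

/-!
If `z₃ = r > 0` is the real root, Vieta's formulas give `z₁ + z₂ = c₂ - r` and `z₁ z₂ r = c₀`, so
`z₁, z₂` are the roots of the real quadratic `X² + (r - c₂) X + c₀ / r`; such a quadratic has both
roots in the open left half-plane iff its coefficients are positive. Since `c₂ < 0`, this reduces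
the condition to `c₀ > 0`. Conversely, `c₀ > 0` means `p(0) < 0`, so `p` has a positive real root
by the intermediate value theorem.
-/

theorem cubic_inj {R : Type*} [CommRing R] {a b c a' b' c' : R} :
    X ^ 3 - C a * X ^ 2 + C b * X - C c = X ^ 3 - C a' * X ^ 2 + C b' * X - C c' ↔
      a = a' ∧ b = b' ∧ c = c' := by
  refine ⟨fun h ↦ ⟨?_, ?_, ?_⟩, by rintro ⟨rfl, rfl, rfl⟩; rfl⟩
  · simpa [coeff_X, coeff_C, coeff_X_pow] using congrArg (coeff · 2) h
  · simpa [coeff_X, coeff_C, coeff_X_pow] using congrArg (coeff · 1) h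
  · simpa [coeff_X, coeff_C, coeff_X_pow] using congrArg (coeff · 0) h

theorem prod_X_sub_C_three {R : Type*} [CommRing R] (z₁ z₂ z₃ : R) :
    (X - C z₁) * (X - C z₂) * (X - C z₃) = X ^ 3 - C (z₁ + z₂ + z₃) * X ^ 2 +
      C (z₁ * z₂ + z₁ * z₃ + z₂ * z₃) * X - C (z₁ * z₂ * z₃) := by
  simp only [map_add, map_mul]
  ring

theorem roots_cubic_eq_iff {R : Type*} [CommRing R] [IsDomain R] (a b c z₁ z₂ z₃ : R) :
    (X ^ 3 - C a * X ^ 2 + C b * X - C c).roots = {z₁, z₂, z₃} ↔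
      a = z₁ + z₂ + z₃ ∧ b = z₁ * z₂ + z₁ * z₃ + z₂ * z₃ ∧ c = z₁ * z₂ * z₃ := by
  rw [← cubic_inj, ← prod_X_sub_C_three]
  have hmonic : (X ^ 3 - C a * X ^ 2 + C b * X - C c).Monic := by monicity!
  constructor
  · intro h
    have hdeg : (X ^ 3 - C a * X ^ 2 + C b * X - C c).natDegree = 3 := by compute_degree!
    rw [← prod_multiset_X_sub_C_of_monic_of_roots_card_eq hmonic (by rw [h, hdeg]; rfl), h]
    simp [mul_assoc]
  · intro h
    have hne : (X - C z₁) * (X - C z₂) ≠ 0 := mul_ne_zero (X_sub_C_ne_zero z₁) (X_sub_C_ne_zero z₂)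
    rw [h, roots_mul (mul_ne_zero hne (X_sub_C_ne_zero z₃)), roots_mul hne,
      roots_X_sub_C, roots_X_sub_C, roots_X_sub_C]
    rfl

theorem exists_roots_cubic_eq_of_isRoot {K : Type*} [Field K] [IsAlgClosed K] {a b c r : K}
    (hr : (X ^ 3 - C a * X ^ 2 + C b * X - C c).IsRoot r) :
    ∃ z₁ z₂, (X ^ 3 - C a * X ^ 2 + C b * X - C c).roots = {z₁, z₂, r} := by
  have hp : (X ^ 3 - C a * X ^ 2 + C b * X - C c).Monic := by monicity!
  obtain ⟨s, hs⟩ := Multiset.exists_cons_of_mem ((mem_roots hp.ne_zero).mpr hr)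
  have hcard : Multiset.card s = 2 := by
    have h3 : Multiset.card (X ^ 3 - C a * X ^ 2 + C b * X - C c).roots = 3 := by
      rw [IsAlgClosed.card_roots_eq_natDegree]
      compute_degree!
    rw [hs, Multiset.card_cons] at h3
    omega
  obtain ⟨z₁, z₂, rfl⟩ := Multiset.card_eq_two.mp hcard
  refine ⟨z₁, z₂, ?_⟩
  rw [hs]
  exact (Multiset.cons_swap r z₁ {z₂}).trans (congrArg (z₁ ::ₘ ·) (Multiset.pair_comm r z₂))

theorem Complex.re_neg_and_re_neg_iff {z w : ℂ} (hs : (z + w).im = 0) (hp : (z * w).im = 0) :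
    z.re < 0 ∧ w.re < 0 ↔ (z + w).re < 0 ∧ 0 < (z * w).re := by
  simp only [add_re, add_im, mul_re, mul_im] at hs hp ⊢
  have him : w.im = -z.im := by linarith
  rw [him] at hp ⊢
  constructor
  · rintro ⟨hz, hw⟩
    exact ⟨by linarith, by nlinarith [sq_nonneg z.im]⟩
  · rintro ⟨hsum, hprod⟩
    -- `z` and `w` are either both real or complex conjugate
    have hcases : z.im = 0 ∨ w.re = z.re := by
      rcases mul_eq_zero.mp (show z.im * (w.re - z.re) = 0 by linear_combination hp) with h | h
      · exact .inl h
      · exact .inr (by linarith)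
    rcases hcases with h | h
    · rw [h] at hprod
      constructor <;> nlinarith
    · constructor <;> linarith

theorem Polynomial.exists_pos_isRoot_of_eval_zero_neg {p : ℝ[X]} (hdeg : 0 < p.degree)
    (hlead : 0 ≤ p.leadingCoeff) (h₀ : p.eval 0 < 0) : ∃ r, 0 < r ∧ p.IsRoot r := by
  obtain ⟨M, hM, hM₀⟩ := (((p.tendsto_atTop_of_leadingCoeff_nonneg hdeg hlead).eventually
    (eventually_gt_atTop 0)).and (eventually_ge_atTop 0)).exists
  obtain ⟨r, hr, hroot⟩ := intermediate_value_Ioo hM₀ p.continuous.continuousOn ⟨h₀, hM⟩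
  exact ⟨r, hr.1, hroot⟩

theorem Complex.re_neg_and_re_neg_iff_of_sum_of_prod {z₁ z₂ : ℂ} {r c₂ c₀ : ℝ} (hr : 0 < r)
    (hsum : (c₂ : ℂ) = z₁ + z₂ + r) (hprod : (c₀ : ℂ) = z₁ * z₂ * r) :
    z₁.re < 0 ∧ z₂.re < 0 ↔ c₂ < r ∧ 0 < c₀ := by
  have hsum_im : (z₁ + z₂).im = 0 := by simpa using (congrArg Complex.im hsum).symm
  have hsum_re : (z₁ + z₂).re = c₂ - r := by
    simpa [eq_sub_iff_add_eq] using (congrArg Complex.re hsum).symm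
  have hprod_im : (z₁ * z₂).im * r = 0 := by simpa using (congrArg Complex.im hprod).symm
  have hprod_re : (z₁ * z₂).re * r = c₀ := by simpa using (congrArg Complex.re hprod).symm
  rw [Complex.re_neg_and_re_neg_iff hsum_im ((mul_eq_zero.mp hprod_im).resolve_right hr.ne'),
    hsum_re, sub_neg, ← hprod_re, mul_pos_iff_of_pos_right hr]

theorem cubic_two_negative_one_real_positive_iff
    (c₀ c₁ c₂ : ℝ) (hc₂ : c₂ < 0) :
    (∃ z₁ z₂ z₃ : ℂ,
        (X ^ 3 - C (c₂ : ℂ) * X ^ 2 + C (c₁ : ℂ) * X - C (c₀ : ℂ)).roots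
          = {z₁, z₂, z₃} ∧
        z₁.re < 0 ∧ z₂.re < 0 ∧ z₃.im = 0 ∧ 0 < z₃.re) ↔ 0 < c₀ := by
  constructor
  · rintro ⟨z₁, z₂, z₃, hroots, h₁, h₂, h₃im, h₃re⟩
    obtain ⟨r, rfl⟩ : ∃ r : ℝ, z₃ = r := ⟨z₃.re, Complex.ext rfl (by simpa using h₃im)⟩
    rw [Complex.ofReal_re] at h₃re
    obtain ⟨hsum, -, hprod⟩ := (roots_cubic_eq_iff _ _ _ _ _ _).mp hroots
    exact ((Complex.re_neg_and_re_neg_iff_of_sum_of_prod h₃re hsum hprod).mp ⟨h₁, h₂⟩).2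
  · intro hc₀
    set q : ℝ[X] := X ^ 3 - C c₂ * X ^ 2 + C c₁ * X - C c₀ with hq
    have hdeg : q.natDegree = 3 := by rw [hq]; compute_degree!
    have hmonic : q.Monic := by rw [hq]; monicity!
    obtain ⟨r, hr, hroot⟩ := q.exists_pos_isRoot_of_eval_zero_neg
      (natDegree_pos_iff_degree_pos.mp (by omega)) (hmonic.leadingCoeff ▸ zero_le_one)
      (by simpa [hq] using hc₀)
    obtain ⟨z₁, z₂, hroots⟩ := exists_roots_cubic_eq_of_isRoot
      (show (X ^ 3 - C (c₂ : ℂ) * X ^ 2 + C (c₁ : ℂ) * X - C (c₀ : ℂ)).IsRoot r by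
        simpa [hq] using congrArg Complex.ofReal hroot)
    obtain ⟨hsum, -, hprod⟩ := (roots_cubic_eq_iff _ _ _ _ _ _).mp hroots
    obtain ⟨h₁, h₂⟩ :=
      (Complex.re_neg_and_re_neg_iff_of_sum_of_prod hr hsum hprod).mpr ⟨by linarith, hc₀⟩
    exact ⟨z₁, z₂, r, hroots, h₁, h₂, Complex.ofReal_im r, by simpa using hr⟩
end

section
/- Let c₀, c₁, c₂ be real numbers with c₂ < 0, c₁ > 0 and c₂c₁ > c₀, and consider the cubic polynomial p(λ) = λ³ − c₂λ² + c₁λ − c₀ over ℂ. Then the multiset of three complex roots of p consists of one real negative root and a pair of non-real complex conjugate roots each having positive real part. -/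
open Polynomial

theorem cubic_one_real_negative_and_conjugate_pair_positive
    (c₀ c₁ c₂ : ℝ) (hc₂ : c₂ < 0) (hc₁ : 0 < c₁) (h : c₀ < c₂ * c₁) :
    ∃ (a : ℝ) (z : ℂ),
      (X ^ 3 - C (c₂ : ℂ) * X ^ 2 + C (c₁ : ℂ) * X - C (c₀ : ℂ)).roots
        = {(a : ℂ), z, (starRingEnd ℂ) z} ∧
      a < 0 ∧ z.im ≠ 0 ∧ 0 < z.re := by
  set f : ℝ → ℝ := fun x => x^3 - c₂*x^2 + c₁*x - c₀ with hf
  have hfc₂ : 0 < f c₂ := by simp only [hf]; nlinarith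
  set t : ℝ := c₂ - 1 - c₁ - (c₂*c₁ - c₀) with ht
  have hd : 0 < c₂*c₁ - c₀ := by linarith
  have hft : f t < 0 := by
    simp only [hf, ht]
    nlinarith [sq_nonneg (c₂*c₁ - c₀), sq_nonneg c₁, sq_nonneg (c₂ - c₁ - (c₂*c₁-c₀)),
      mul_pos hc₁ hd, sq_nonneg (1 + c₂*c₁ - c₀), mul_pos hd hd,
      mul_pos (mul_pos hd hd) hd]
  have htc : t ≤ c₂ := by simp only [ht]; linarith
  obtain ⟨a, ha_mem, ha⟩ : ∃ a ∈ Set.Icc t c₂, f a = 0 := by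
    have hcont : ContinuousOn f (Set.Icc t c₂) := by
      apply Continuous.continuousOn; simp only [hf]; continuity
    have := intermediate_value_Icc htc hcont
    have h0 : (0:ℝ) ∈ Set.Icc (f t) (f c₂) := ⟨le_of_lt hft, le_of_lt hfc₂⟩
    obtain ⟨a, ha1, ha2⟩ := this h0
    exact ⟨a, ha1, ha2⟩
  have haeq : a^3 - c₂*a^2 + c₁*a - c₀ = 0 := ha
  have hac₂ : a < c₂ := by
    rcases lt_or_eq_of_le ha_mem.2 with h' | h'
    · exact h'
    · exfalso; rw [h'] at ha; linarith [hfc₂, ha ▸ (le_refl (f c₂))]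
  have ha0 : a < 0 := lt_trans hac₂ hc₂
  set γ : ℝ := a^2 - a*c₂ + c₁ with hγ
  set r : ℝ := (c₂ - a)/2 with hr
  have hrpos : 0 < r := by simp only [hr]; linarith
  have hpos : 0 < γ - r^2 := by
    simp only [hγ, hr]
    nlinarith [mul_pos (show (0:ℝ) < c₂ - a by linarith)
      (show (0:ℝ) < -(3*a+c₂) by linarith)]
  set s : ℝ := Real.sqrt (γ - r^2) with hs
  have hs2 : s^2 = γ - r^2 := Real.sq_sqrt hpos.le
  have hspos : 0 < s := Real.sqrt_pos.mpr hpos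
  set z : ℂ := (r : ℂ) + (s : ℂ) * Complex.I with hz
  have hconj : (starRingEnd ℂ) z = (r : ℂ) - (s : ℂ) * Complex.I := by
    simp [hz, map_add, map_mul, Complex.conj_ofReal, Complex.conj_I]; ring
  have hzre : z.re = r := by simp [hz]
  have hzim : z.im = s := by simp [hz]
  -- the three symmetric-function identities
  have e1 : (a:ℂ) + z + (starRingEnd ℂ) z = (c₂ : ℂ) := by
    rw [hconj, hz]
    have : a + 2*r = c₂ := by simp only [hr]; ring
    push_cast [← this]; ring
  have e2 : (a:ℂ)*z + (a:ℂ)*((starRingEnd ℂ) z) + z*((starRingEnd ℂ) z) = (c₁ : ℂ) := by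
    rw [hconj, hz]
    have key : a*(2*r) + (r^2 + s^2) = c₁ := by
      rw [hs2]; simp only [hγ, hr]; ring
    have hI : (Complex.I : ℂ)^2 = -1 := Complex.I_sq
    have : ((a:ℂ))*((r:ℂ) + (s:ℂ)*Complex.I) + (a:ℂ)*((r:ℂ) - (s:ℂ)*Complex.I)
        + ((r:ℂ) + (s:ℂ)*Complex.I)*((r:ℂ) - (s:ℂ)*Complex.I)
        = ((a*(2*r) + (r^2 + s^2) : ℝ) : ℂ) := by
      push_cast; linear_combination (-(s:ℂ)^2) * hI
    rw [this, key]
  have e3 : (a:ℂ)*z*((starRingEnd ℂ) z) = (c₀ : ℂ) := by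
    rw [hconj, hz]
    have key : a*(r^2 + s^2) = c₀ := by
      rw [hs2]; simp only [hγ, hr]; nlinarith [haeq]
    have hI : (Complex.I : ℂ)^2 = -1 := Complex.I_sq
    have : ((a:ℂ))*((r:ℂ) + (s:ℂ)*Complex.I)*((r:ℂ) - (s:ℂ)*Complex.I)
        = ((a*(r^2 + s^2) : ℝ) : ℂ) := by
      push_cast; linear_combination (-(a:ℂ)*(s:ℂ)^2) * hI
    rw [this, key]
  have key : (X ^ 3 - C (c₂:ℂ) * X ^ 2 + C (c₁:ℂ) * X - C (c₀:ℂ))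
      = (X - C (a:ℂ)) * (X - C z) * (X - C ((starRingEnd ℂ) z)) := by
    rw [← e1, ← e2, ← e3]
    simp only [map_add, map_mul]
    ring
  refine ⟨a, z, ?_, ha0, by rw [hzim]; exact hspos.ne', by rw [hzre]; exact hrpos⟩
  rw [key, roots_mul (mul_ne_zero (mul_ne_zero (X_sub_C_ne_zero _) (X_sub_C_ne_zero _))
      (X_sub_C_ne_zero _)),
    roots_mul (mul_ne_zero (X_sub_C_ne_zero _) (X_sub_C_ne_zero _)),
    roots_X_sub_C, roots_X_sub_C, roots_X_sub_C]
  rfl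
end

section
/- Let g(y) = a₃y³ + a₂y² + a₁y + a₀ be a real cubic with a₃ < 0 and a₀ < 0. Then there exists y' > 0 with g(y') > 0 if and only if all three inequalities hold: 0 < a₂² − 3a₁a₃; 0 < a₂ + √(a₂² − 3a₁a₃); and 0 < 2a₂³ + 2(a₂² − 3a₁a₃)^{3/2} − 9a₁a₂a₃ + 27a₀a₃². -/
theorem cubic_positive_value_iff
    (a₀ a₁ a₂ a₃ : ℝ) (ha₃ : a₃ < 0) (ha₀ : a₀ < 0) :
    (∃ y' > (0 : ℝ), a₃ * y' ^ 3 + a₂ * y' ^ 2 + a₁ * y' + a₀ > 0) ↔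
      (0 < a₂ ^ 2 - 3 * a₁ * a₃ ∧
       0 < a₂ + Real.sqrt (a₂ ^ 2 - 3 * a₁ * a₃) ∧
       0 < 2 * a₂ ^ 3 + 2 * Real.sqrt (a₂ ^ 2 - 3 * a₁ * a₃) ^ 3
            - 9 * a₁ * a₂ * a₃ + 27 * a₀ * a₃ ^ 2) := by
  have hs0 : (0:ℝ) ≤ Real.sqrt (a₂ ^ 2 - 3 * a₁ * a₃) := Real.sqrt_nonneg _
  set s := Real.sqrt (a₂ ^ 2 - 3 * a₁ * a₃) with hs
  constructor
  · rintro ⟨y, hy, hg⟩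
    have hD : 0 < a₂ ^ 2 - 3 * a₁ * a₃ := by
      by_contra h
      push_neg at h
      have ha₁ : 0 ≤ a₁ * a₃ := by nlinarith [sq_nonneg a₂]
      have hQ : a₃ * y ^ 2 + a₂ * y + a₁ ≤ 0 := by
        nlinarith [sq_nonneg (2 * a₃ * y + a₂)]
      nlinarith [mul_nonneg hy.le (neg_nonneg.mpr hQ)]
    have hs2 : s ^ 2 = a₂ ^ 2 - 3 * a₁ * a₃ := Real.sq_sqrt hD.le
    have h2 : 0 < a₂ + s := by
      by_contra h
      push_neg at h
      have ha₂ : a₂ ≤ 0 := by linarith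
      have ha₁ : a₁ ≤ 0 := by nlinarith
      nlinarith [mul_pos (mul_pos hy hy) hy, mul_pos hy hy, mul_nonneg (mul_nonneg hy.le hy.le) hy.le]
    refine ⟨hD, h2, ?_⟩
    rcases le_or_gt (3 * a₃ * y) (2 * s - a₂) with hc | hc
    · -- y ≥ c : E ≥ 27 a₃² g(y) > 0
      nlinarith [sq_nonneg (3 * a₃ * y + a₂ + s), mul_pos (mul_pos (by norm_num : (0:ℝ) < 27) (mul_pos (mul_pos (neg_pos.mpr ha₃) (neg_pos.mpr ha₃)) hg)) (by norm_num : (0:ℝ) < 1), mul_nonneg (sq_nonneg (3 * a₃ * y + a₂ + s)) (by linarith : (0:ℝ) ≤ 2 * s - a₂ - 3 * a₃ * y)]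
    · -- y < c : g(y) < a₀ contradiction
      exfalso
      have hP : 0 < 3 * a₃ ^ 2 * y ^ 2 + 3 * a₂ * a₃ * y + a₂ ^ 2 - s ^ 2 := by
        nlinarith [sq_nonneg (3 * a₃ * y + a₂ - 2 * s), mul_nonneg (by linarith : (0:ℝ) ≤ 4 * s + a₂) (by linarith : (0:ℝ) ≤ 3 * a₃ * y + a₂ - 2 * s), sq_nonneg (s + a₂)]
      -- a₃ y² + a₂ y + a₁ = P/(3a₃) < 0, with y > 0 ⇒ g(y) < a₀ < 0
      nlinarith [mul_pos hy hP, hs2]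
  · rintro ⟨hD, h2, h3⟩
    have hs2 : s ^ 2 = a₂ ^ 2 - 3 * a₁ * a₃ := Real.sq_sqrt hD.le
    refine ⟨(a₂ + s) / (-3 * a₃), div_pos h2 (by linarith), ?_⟩
    have h3a : (-3 * a₃) ≠ 0 := by linarith
    have hyu : (-3 * a₃) * ((a₂ + s) / (-3 * a₃)) = a₂ + s := mul_div_cancel₀ _ h3a
    have key : 27 * a₃ ^ 2 * (a₃ * ((a₂ + s) / (-3 * a₃)) ^ 3 + a₂ * ((a₂ + s) / (-3 * a₃)) ^ 2 + a₁ * ((a₂ + s) / (-3 * a₃)) + a₀) = 2 * a₂ ^ 3 + 2 * s ^ 3 - 9 * a₁ * a₂ * a₃ + 27 * a₀ * a₃ ^ 2 := by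
      linear_combination (-(((-3 * a₃) * ((a₂ + s) / (-3 * a₃))) ^ 2 + ((-3 * a₃) * ((a₂ + s) / (-3 * a₃))) * (a₂ + s) + (a₂ + s) ^ 2) + 3 * a₂ * (((-3 * a₃) * ((a₂ + s) / (-3 * a₃))) + (a₂ + s)) - 9 * a₁ * a₃) * hyu + (-3 * s) * hs2
    nlinarith [sq_nonneg a₃, key, h3, mul_pos (mul_pos (neg_pos.mpr ha₃) (neg_pos.mpr ha₃)) (neg_pos.mpr ha₃)]
end

section
/- Let J be a 3×3 real matrix all of whose complex eigenvalues (roots of its characteristic polynomial over ℂ) have negative real part. Then trace J < 0, trace(adjugate J) > 0, det J < 0, and (trace J)·(trace(adjugate J)) < det J. -/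
/-!
Let `χ` be the characteristic polynomial of `J`. Its real roots are among its complex roots, so
they are negative; and since each complex root `z` differs from `tr J` by the sum of the two
other roots, `tr J < Re z`. Thus `χ` has no real root in `[0, ∞)` nor in `(-∞, tr J]`. As `χ`
is monic of odd degree, the intermediate value theorem gives `χ 0 = -det J > 0` and
`χ (tr J) = tr J · tr (adj J) - det J < 0`. Finally `tr J < 0` because `tr J` is the sum of the
complex roots, and then `tr J · tr (adj J) < det J < 0` forces `tr (adj J) > 0`.
-/

open Matrix Polynomial

theorem Multiset.sum_lt_of_mem {α : Type*} [AddCommMonoid α] [PartialOrder α]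
    [IsOrderedCancelAddMonoid α] {s : Multiset α} (hs : ∀ x ∈ s, x < 0) (hcard : 2 ≤ card s)
    {x : α} (hx : x ∈ s) : s.sum < x := by
  obtain ⟨t, rfl⟩ := exists_cons_of_mem hx
  have ht : t ≠ 0 := by rintro rfl; simp at hcard
  have hneg : t.sum < 0 := by
    simpa using sum_lt_sum_of_nonempty ht fun y hy => hs y (mem_cons_of_mem hy)
  simpa using add_lt_of_neg_right x hneg

namespace Polynomial

theorem eval_pos_of_forall_ge_not_isRoot {p : ℝ[X]} (hp : 0 < p.leadingCoeff)
    (hdeg : 0 < p.degree) {s : ℝ} (h : ∀ x, s ≤ x → ¬ p.IsRoot x) : 0 < p.eval s := by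
  obtain ⟨y, hy, hsy⟩ := ((p.tendsto_atTop_of_leadingCoeff_nonneg hdeg hp.le).eventually
    (Filter.eventually_gt_atTop 0) |>.and (Filter.eventually_ge_atTop s)).exists
  by_contra! hs
  obtain ⟨x, hx, hroot⟩ := intermediate_value_Icc hsy p.continuous.continuousOn ⟨hs, hy.le⟩
  exact h x hx.1 hroot

theorem eval_neg_of_forall_le_not_isRoot {p : ℝ[X]} (hp : 0 < p.leadingCoeff)
    (hodd : Odd p.natDegree) {s : ℝ} (h : ∀ x ≤ s, ¬ p.IsRoot x) : p.eval s < 0 := by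
  have hpos := eval_pos_of_forall_ge_not_isRoot (p := -p.comp (-X)) (s := -s)
    (by simpa [hodd.neg_one_pow] using hp)
    (by simpa using natDegree_pos_iff_degree_pos.mp hodd.pos)
    (fun x hx hroot => h (-x) (by linarith) (by simpa using hroot))
  simpa using hpos

theorem ofReal_mem_roots_map {p : ℝ[X]} (hp : p ≠ 0) {x : ℝ} (hx : p.IsRoot x) :
    (x : ℂ) ∈ (p.map (algebraMap ℝ ℂ)).roots := by
  rw [mem_roots_map hp, ← Complex.coe_algebraMap, eval₂_at_apply, hx.eq_zero, map_zero]

end Polynomial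

namespace Matrix

theorem charpoly_fin_three {R : Type*} [CommRing R] (M : Matrix (Fin 3) (Fin 3) R) :
    M.charpoly = X ^ 3 - C M.trace * X ^ 2 + C M.adjugate.trace * X - C M.det := by
  rw [charpoly, det_fin_three, trace_fin_three, adjugate_fin_three, det_fin_three]
  simp [trace_fin_three]
  ring

theorem trace_lt_re_of_mem_roots_charpoly_map {n : Type*} [Fintype n] [DecidableEq n]
    (hn : 2 ≤ Fintype.card n) (A : Matrix n n ℝ)
    (hA : ∀ z ∈ (A.charpoly.map (algebraMap ℝ ℂ)).roots, z.re < 0) {z : ℂ}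
    (hz : z ∈ (A.charpoly.map (algebraMap ℝ ℂ)).roots) : A.trace < z.re := by
  set roots := (A.charpoly.map (algebraMap ℝ ℂ)).roots
  have htrace : A.trace = (roots.map Complex.re).sum := by
    have hsum := trace_eq_sum_roots_charpoly (A.map (algebraMap ℝ ℂ))
    rw [charpoly_map, ← AddMonoidHom.map_trace] at hsum
    rw [← Complex.ofReal_re A.trace, ← Complex.coe_algebraMap, hsum]
    exact map_multiset_sum Complex.reAddGroupHom roots
  have hcard : roots.card = Fintype.card n := by
    rw [IsAlgClosed.card_roots_map_eq_natDegree_of_injective _ (algebraMap ℝ ℂ).injective,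
      charpoly_natDegree_eq_dim]
  rw [htrace]
  exact Multiset.sum_lt_of_mem (by simpa using hA) (by simpa [hcard] using hn)
    (Multiset.mem_map_of_mem _ hz)

end Matrix

theorem stable_matrix_routh_hurwitz
    (J : Matrix (Fin 3) (Fin 3) ℝ)
    (hJ : ∀ z ∈ (J.charpoly.map (algebraMap ℝ ℂ)).roots, z.re < 0) :
    J.trace < 0 ∧ 0 < J.adjugate.trace ∧ J.det < 0 ∧
      J.trace * J.adjugate.trace < J.det := by
  have htrace_lt : ∀ z ∈ (J.charpoly.map (algebraMap ℝ ℂ)).roots, J.trace < z.re :=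
    fun z hz => J.trace_lt_re_of_mem_roots_charpoly_map (by simp) hJ hz
  have hreal_roots : ∀ x : ℝ, J.charpoly.IsRoot x → J.trace < x ∧ x < 0 := fun x hx =>
    have hmem := ofReal_mem_roots_map J.charpoly_monic.ne_zero hx
    ⟨by simpa using htrace_lt _ hmem, by simpa using hJ _ hmem⟩
  have hlc : 0 < J.charpoly.leadingCoeff := by simp [J.charpoly_monic.leadingCoeff]
  have hdeg : J.charpoly.natDegree = 3 := by simp [charpoly_natDegree_eq_dim]
  have hdet : J.det < 0 := by
    have hpos := eval_pos_of_forall_ge_not_isRoot hlc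
      (natDegree_pos_iff_degree_pos.mp (by omega)) (s := 0)
      fun x hx hroot => (hreal_roots x hroot).2.not_ge hx
    simpa [charpoly_fin_three] using hpos
  have hhurwitz : J.trace * J.adjugate.trace < J.det := by
    have hneg := eval_neg_of_forall_le_not_isRoot hlc (by rw [hdeg]; decide) (s := J.trace)
      fun x hx hroot => (hreal_roots x hroot).1.not_ge hx
    simp only [charpoly_fin_three, eval_sub, eval_add, eval_mul, eval_pow, eval_C, eval_X] at hneg
    linarith
  have htrace : J.trace < 0 := by
    obtain ⟨z, hz⟩ := IsAlgClosed.exists_root (J.charpoly.map (algebraMap ℝ ℂ))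
      (by simp [degree_map, charpoly_degree_eq_dim])
    have hmem := (mem_roots (J.charpoly_monic.map _).ne_zero).2 hz
    exact (htrace_lt z hmem).trans (hJ z hmem)
  exact ⟨htrace, pos_of_mul_neg_right (by linarith) htrace.le, hdet, hhurwitz⟩
end

section
/- Let J be a 3×3 real matrix all of whose complex eigenvalues have negative real part, let d₁, d₂, d₃ > 0 be reals, and for y ≥ 0 set J(y) = J − y·diag(d₁, d₂, d₃). Then the system admits a Turing–Hopf instability if and only if there exists y'' > 0 such that trace(adjugate J(y'')) > 0 and trace(J(y''))·trace(adjugate J(y'')) − det J(y'') > 0. -/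
open Matrix Polynomial

/-- The multiset of complex eigenvalues of a real 3×3 matrix, i.e. the roots of its
characteristic polynomial regarded as a polynomial over `ℂ`. -/
noncomputable def eigs (M : Matrix (Fin 3) (Fin 3) ℝ) : Multiset ℂ :=
  (M.charpoly.map (algebraMap ℝ ℂ)).roots

/-- `Jmat J d₁ d₂ d₃ y = J - y • diag(d₁, d₂, d₃)`. -/
noncomputable def Jmat (J : Matrix (Fin 3) (Fin 3) ℝ) (d₁ d₂ d₃ y : ℝ) :
    Matrix (Fin 3) (Fin 3) ℝ :=
  J - y • Matrix.diagonal ![d₁, d₂, d₃]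

/-!
Write `T`, `A`, `D` for the trace, the trace of the adjugate and the determinant, so that the
characteristic polynomial is `λ³ - Tλ² + Aλ - D` and `TA - D = (λ₁+λ₂)(λ₁+λ₃)(λ₂+λ₃)`.
If `T < 0` and `A > 0`, this product cannot be positive for a real spectrum, while for a
spectrum `{w, w̄, r}` it equals `2 Re w · |w + r|²`. This gives the easy direction, and
`TA - D > 0`, `D < 0` at a Turing–Hopf point `y₀` of `J(y)`.

If moreover `A(y₀) ≤ 0` and `TA - D ≤ 0` wherever `A > 0`, then at the roots `g₁ < y₀ < g₂` of
the quadratic `A(y)` (positive at `0` by stability of `J`) continuity gives `D = -(TA - D) ≥ 0`.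
With `D(0) < 0`, `D(y₀) < 0` and leading coefficient `-d₁d₂d₃ < 0`, the cubic `D(y)` would
change sign too often.
-/

open Set ComplexConjugate

-- The third divided difference of `P` at the `xᵢ` is `a₃ ≤ 0`, but the sign pattern makes it
-- positive; `key` is this identity multiplied by the Vandermonde product.
theorem false_of_cubic_sign_alternation {P : ℝ → ℝ} {a₀ a₁ a₂ a₃ x₀ x₁ x₂ x₃ : ℝ}
    (hP : ∀ t, P t = a₀ + a₁ * t + a₂ * t ^ 2 + a₃ * t ^ 3) (ha₃ : a₃ ≤ 0)
    (h₀₁ : x₀ < x₁) (h₁₂ : x₁ < x₂) (h₂₃ : x₂ < x₃)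
    (hP₀ : P x₀ < 0) (hP₁ : 0 ≤ P x₁) (hP₂ : P x₂ < 0) (hP₃ : 0 ≤ P x₃) : False := by
  have key : a₃ * ((x₁ - x₀) * (x₂ - x₀) * (x₃ - x₀) * (x₂ - x₁) * (x₃ - x₁) * (x₃ - x₂)) =
      -P x₀ * ((x₂ - x₁) * (x₃ - x₁) * (x₃ - x₂))
        + P x₁ * ((x₂ - x₀) * (x₃ - x₀) * (x₃ - x₂))
        - P x₂ * ((x₁ - x₀) * (x₃ - x₀) * (x₃ - x₁))
        + P x₃ * ((x₁ - x₀) * (x₂ - x₀) * (x₂ - x₁)) := by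
    simp only [hP]; ring
  have d₀₁ := sub_pos.2 h₀₁
  have d₁₂ := sub_pos.2 h₁₂
  have d₂₃ := sub_pos.2 h₂₃
  have d₀₂ := sub_pos.2 (h₀₁.trans h₁₂)
  have d₁₃ := sub_pos.2 (h₁₂.trans h₂₃)
  have d₀₃ := sub_pos.2 (h₀₁.trans (h₁₂.trans h₂₃))
  have hQ₀ := neg_pos.2 hP₀
  have hQ₂ := neg_pos.2 hP₂
  have : a₃ * ((x₁ - x₀) * (x₂ - x₀) * (x₃ - x₀) * (x₂ - x₁) * (x₃ - x₁) * (x₃ - x₂)) ≤ 0 :=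
    mul_nonpos_of_nonpos_of_nonneg ha₃ (by positivity)
  have : 0 < -P x₀ * ((x₂ - x₁) * (x₃ - x₁) * (x₃ - x₂)) := by positivity
  have : 0 ≤ P x₁ * ((x₂ - x₀) * (x₃ - x₀) * (x₃ - x₂)) := by positivity
  have : 0 < -P x₂ * ((x₁ - x₀) * (x₃ - x₀) * (x₃ - x₁)) := by positivity
  have : 0 ≤ P x₃ * ((x₁ - x₀) * (x₂ - x₀) * (x₂ - x₁)) := by positivity
  linarith

theorem exists_factorization_of_quadratic_nonpos {b₀ b₁ c y₀ : ℝ} (hc : 0 < c)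
    (h : b₀ + b₁ * y₀ + c * y₀ ^ 2 ≤ 0) :
    ∃ g₁ g₂, g₁ ≤ y₀ ∧ y₀ ≤ g₂ ∧ ∀ t, b₀ + b₁ * t + c * t ^ 2 = c * ((t - g₁) * (t - g₂)) := by
  set s := √(b₁ ^ 2 - 4 * c * b₀)
  have hs : s ^ 2 = b₁ ^ 2 - 4 * c * b₀ :=
    Real.sq_sqrt (by nlinarith [sq_nonneg (2 * c * y₀ + b₁)])
  have hy : |2 * c * y₀ + b₁| ≤ s := Real.abs_le_sqrt (by nlinarith)
  rw [abs_le] at hy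
  refine ⟨(-b₁ - s) / (2 * c), (-b₁ + s) / (2 * c), ?_, ?_, fun t => ?_⟩
  · rw [div_le_iff₀ (by positivity)]; linarith
  · rw [le_div_iff₀ (by positivity)]; linarith
  · have hc' : c ≠ 0 := hc.ne'
    field_simp
    linear_combination hs

theorem Continuous.nonpos_on_Icc {f : ℝ → ℝ} (hf : Continuous f) {a b : ℝ} (hab : a < b)
    (h : ∀ t ∈ Ioo a b, f t ≤ 0) : ∀ t ∈ Icc a b, f t ≤ 0 := by
  rw [← closure_Ioo hab.ne]
  exact (isClosed_le hf continuous_const).closure_subset_iff.2 h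

theorem exists_pos_and_mul_sub_pos_of_quadratic_cubic {T A D : ℝ → ℝ}
    {b₀ b₁ c a₀ a₁ a₂ a₃ y₀ : ℝ} (hT : Continuous T)
    (hA : ∀ t, A t = b₀ + b₁ * t + c * t ^ 2) (hc : 0 < c) (hb₀ : 0 < b₀)
    (hD : ∀ t, D t = a₀ + a₁ * t + a₂ * t ^ 2 + a₃ * t ^ 3) (ha₃ : a₃ ≤ 0) (ha₀ : a₀ < 0)
    (hy₀ : 0 < y₀) (hAy₀ : A y₀ ≤ 0) (hDy₀ : D y₀ < 0) :
    ∃ t > 0, 0 < A t ∧ 0 < T t * A t - D t := by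
  by_contra! hF
  rw [hA] at hAy₀
  obtain ⟨g₁, g₂, hg₁, hg₂, hfac⟩ := exists_factorization_of_quadratic_nonpos hc hAy₀
  have hA' : ∀ t, A t = c * ((t - g₁) * (t - g₂)) := fun t => (hA t).trans (hfac t)
  have hg₁_pos : 0 < g₁ := by
    have h0 : b₀ = c * (g₁ * g₂) := by simpa using (hA 0).symm.trans (hA' 0)
    nlinarith [mul_pos hc (hy₀.trans_le hg₂)]
  have hF_cont : Continuous fun t => T t * A t - D t := by
    simp only [hA, hD]
    fun_prop
  have hD_nonneg : ∀ a b g, 0 ≤ a → a < b → (∀ t ∈ Ioo a b, 0 < A t) → g ∈ Icc a b →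
      A g = 0 → 0 ≤ D g := by
    intro a b g ha hab hApos hg hAg
    have := hF_cont.nonpos_on_Icc hab (fun t ht => hF t (ha.trans_lt ht.1) (hApos t ht)) g hg
    rw [hAg] at this
    linarith
  have hDg₁ : 0 ≤ D g₁ := hD_nonneg 0 g₁ g₁ le_rfl hg₁_pos
    (fun t ht => by
      rw [hA']
      exact mul_pos hc (mul_pos_of_neg_of_neg (by linarith [ht.2]) (by linarith [ht.2])))
    (right_mem_Icc.2 hg₁_pos.le) (by simp [hA'])
  have hDg₂ : 0 ≤ D g₂ := hD_nonneg g₂ (g₂ + 1) g₂ (hy₀.le.trans hg₂) (by linarith)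
    (fun t ht => by
      rw [hA']
      exact mul_pos hc (mul_pos (by linarith [ht.1]) (by linarith [ht.1])))
    (left_mem_Icc.2 (by linarith)) (by simp [hA'])
  refine false_of_cubic_sign_alternation hD ha₃ hg₁_pos (hg₁.lt_of_ne ?_) (hg₂.lt_of_ne ?_)
    (by simpa [hD] using ha₀) hDg₁ hDy₀ hDg₂
  · rintro rfl; linarith
  · rintro rfl; linarith

theorem add_mul_add_mul_add_nonpos {x y z : ℝ} (h₁ : x + y + z < 0)
    (h₂ : 0 < x * y + x * z + y * z) : (x + y) * (x + z) * (y + z) ≤ 0 := by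
  by_contra! h₃
  rcases lt_or_ge 0 (x + y) with hxy | hxy <;> rcases lt_or_ge 0 (x + z) with hxz | hxz <;>
    rcases lt_or_ge 0 (y + z) with hyz | hyz <;>
    nlinarith [sq_nonneg x, sq_nonneg y, sq_nonneg z]

theorem Matrix.charpoly_fin_three_s11 {R : Type*} [CommRing R] (M : Matrix (Fin 3) (Fin 3) R) :
    M.charpoly = (⟨1, -M.trace, M.adjugate.trace, -M.det⟩ : Cubic R).toPoly := by
  simp only [Matrix.charpoly, Matrix.det_fin_three, Cubic.toPoly, Matrix.trace_fin_three,
    Matrix.adjugate_fin_three, Matrix.charmatrix_apply, Matrix.diagonal_apply]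
  simp [Fin.ext_iff]
  ring

section Eigenvalues

variable {M : Matrix (Fin 3) (Fin 3) ℝ}

theorem eigs_eq_cubic_roots (M : Matrix (Fin 3) (Fin 3) ℝ) :
    eigs M = (Cubic.map (algebraMap ℝ ℂ) ⟨1, -M.trace, M.adjugate.trace, -M.det⟩).roots := by
  rw [eigs, Matrix.charpoly_fin_three_s11, Cubic.map_roots]

theorem exists_eigs_eq_three (M : Matrix (Fin 3) (Fin 3) ℝ) :
    ∃ x y z : ℂ, eigs M = {x, y, z} := by
  rw [eigs_eq_cubic_roots]
  exact (Cubic.splits_iff_roots_eq_three one_ne_zero).1 (IsAlgClosed.splits _)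

theorem trace_adjugate_trace_det_of_eigs_eq {x y z : ℂ} (h : eigs M = {x, y, z}) :
    (M.trace : ℂ) = x + y + z ∧ (M.adjugate.trace : ℂ) = x * y + x * z + y * z ∧
      (M.det : ℂ) = x * y * z := by
  rw [eigs_eq_cubic_roots] at h
  have hb := Cubic.b_eq_three_roots one_ne_zero h
  have hc := Cubic.c_eq_three_roots one_ne_zero h
  have hd := Cubic.d_eq_three_roots one_ne_zero h
  simp only [map_one, map_neg, one_mul, Complex.coe_algebraMap, neg_inj] at hb hc hd
  exact ⟨hb, hc, hd⟩

theorem conj_mem_eigs {w : ℂ} (hw : w ∈ eigs M) : conj w ∈ eigs M := by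
  have hne : M.charpoly.map (algebraMap ℝ ℂ) ≠ 0 := (M.charpoly_monic.map _).ne_zero
  rw [eigs, mem_roots hne, IsRoot, eval_map, ← aeval_def] at hw ⊢
  rw [aeval_conj, hw, map_zero]

theorem eigs_real_or_conj_pair (M : Matrix (Fin 3) (Fin 3) ℝ) :
    (∃ x y z : ℝ, eigs M = {(x : ℂ), (y : ℂ), (z : ℂ)}) ∨
      ∃ (w : ℂ) (r : ℝ), w.im ≠ 0 ∧ eigs M = {w, conj w, (r : ℂ)} := by
  obtain ⟨x, y, z, h⟩ := exists_eigs_eq_three M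
  by_cases hreal : ∀ v ∈ eigs M, v.im = 0
  · left
    have hre : ∀ v ∈ eigs M, (v.re : ℂ) = v :=
      fun v hv => Complex.conj_eq_iff_re.1 (Complex.conj_eq_iff_im.2 (hreal v hv))
    refine ⟨x.re, y.re, z.re, ?_⟩
    rw [h] at hre ⊢
    simp_all
  right
  push Not at hreal
  obtain ⟨w, hw, hwim⟩ := hreal
  have hconj : conj w ∈ (eigs M).erase w :=
    (Multiset.mem_erase_of_ne (mt Complex.conj_eq_iff_im.1 hwim)).2 (conj_mem_eigs hw)
  obtain ⟨t, ht⟩ : ∃ t, ((eigs M).erase w).erase (conj w) = {t} := by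
    rw [← Multiset.card_eq_one, Multiset.card_erase_of_mem hconj,
      Multiset.card_erase_of_mem hw, h]
    rfl
  have hM : eigs M = {w, conj w, t} := by
    rw [← Multiset.cons_erase hw, ← Multiset.cons_erase hconj, ht]
    rfl
  have ht_im : t.im = 0 := by
    simpa using (congrArg Complex.im (trace_adjugate_trace_det_of_eigs_eq hM).1).symm
  exact ⟨w, t.re, hwim, by rw [Complex.conj_eq_iff_re.1 (Complex.conj_eq_iff_im.2 ht_im), hM]⟩

theorem trace_adjugate_trace_det_of_eigs_eq_conj_pair {w : ℂ} {r : ℝ}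
    (h : eigs M = {w, conj w, (r : ℂ)}) :
    M.trace = 2 * w.re + r ∧ M.adjugate.trace = Complex.normSq w + 2 * w.re * r ∧
      M.det = Complex.normSq w * r := by
  obtain ⟨htr, hadj, hdet⟩ := trace_adjugate_trace_det_of_eigs_eq h
  have hsum : w + conj w = ((2 * w.re : ℝ) : ℂ) := by rw [Complex.add_conj]
  refine ⟨?_, ?_, ?_⟩ <;> apply Complex.ofReal_injective
  · rw [htr, hsum]; push_cast; ring
  · rw [hadj, show w * conj w + w * r + conj w * r = w * conj w + (w + conj w) * r by ring,
      Complex.mul_conj, hsum]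
    push_cast; ring
  · rw [hdet, Complex.mul_conj]; push_cast; ring

theorem trace_mul_adjugate_trace_sub_det_of_eigs_eq_conj_pair {w : ℂ} {r : ℝ}
    (h : eigs M = {w, conj w, (r : ℂ)}) :
    M.trace * M.adjugate.trace - M.det = 2 * w.re * Complex.normSq (w + r) := by
  obtain ⟨htr, hadj, hdet⟩ := trace_adjugate_trace_det_of_eigs_eq_conj_pair h
  rw [htr, hadj, hdet]
  simp only [Complex.normSq_apply, Complex.add_re, Complex.add_im, Complex.ofReal_re,
    Complex.ofReal_im]
  ring

theorem trace_neg_and_adjugate_trace_pos_and_det_neg (hM : ∀ z ∈ eigs M, z.re < 0) :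
    M.trace < 0 ∧ 0 < M.adjugate.trace ∧ M.det < 0 := by
  rcases eigs_real_or_conj_pair M with ⟨x, y, z, h⟩ | ⟨w, r, hw, h⟩
  · obtain ⟨htr, hadj, hdet⟩ := trace_adjugate_trace_det_of_eigs_eq h
    have hx : x < 0 := by simpa using hM x (by simp [h])
    have hy : y < 0 := by simpa using hM y (by simp [h])
    have hz : z < 0 := by simpa using hM z (by simp [h])
    norm_cast at htr hadj hdet
    rw [htr, hadj, hdet]
    have hxy := mul_pos_of_neg_of_neg hx hy
    exact ⟨by linarith, by nlinarith [mul_pos_of_neg_of_neg hx hz], by nlinarith⟩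
  · obtain ⟨htr, hadj, hdet⟩ := trace_adjugate_trace_det_of_eigs_eq_conj_pair h
    have hwre : w.re < 0 := hM w (by simp [h])
    have hr : r < 0 := by simpa using hM r (by simp [h])
    have hn : 0 < Complex.normSq w := Complex.normSq_pos.2 (fun h0 => hw (by simp [h0]))
    rw [htr, hadj, hdet]
    exact ⟨by linarith, by nlinarith [mul_pos_of_neg_of_neg hwre hr],
      mul_neg_of_pos_of_neg hn hr⟩

theorem det_neg_and_trace_mul_adjugate_trace_sub_det_pos (htr : M.trace < 0) {z : ℂ}
    (hz : z ∈ eigs M) (hzim : z.im ≠ 0) (hzre : 0 < z.re) :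
    M.det < 0 ∧ 0 < M.trace * M.adjugate.trace - M.det := by
  rcases eigs_real_or_conj_pair M with ⟨x, y, z', h⟩ | ⟨w, r, hw, h⟩
  · rw [h] at hz
    simp only [Multiset.insert_eq_cons, Multiset.mem_cons, Multiset.mem_singleton] at hz
    rcases hz with rfl | rfl | rfl <;> simp at hzim
  obtain ⟨htr', -, hdet⟩ := trace_adjugate_trace_det_of_eigs_eq_conj_pair h
  have hwre : 0 < w.re := by
    rw [h] at hz
    simp only [Multiset.insert_eq_cons, Multiset.mem_cons, Multiset.mem_singleton] at hz
    rcases hz with rfl | rfl | rfl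
    · exact hzre
    · simpa using hzre
    · simp at hzim
  have hr : r < 0 := by linarith
  have hn : 0 < Complex.normSq w := Complex.normSq_pos.2 (fun h0 => hw (by simp [h0]))
  have hnr : 0 < Complex.normSq (w + r) :=
    Complex.normSq_pos.2 (fun h0 => hw (by simpa using congrArg Complex.im h0))
  rw [trace_mul_adjugate_trace_sub_det_of_eigs_eq_conj_pair h, hdet]
  exact ⟨mul_neg_of_pos_of_neg hn hr, by positivity⟩

theorem exists_mem_eigs_im_ne_zero_re_pos (htr : M.trace < 0) (hadj : 0 < M.adjugate.trace)
    (hF : 0 < M.trace * M.adjugate.trace - M.det) : ∃ z ∈ eigs M, z.im ≠ 0 ∧ 0 < z.re := by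
  rcases eigs_real_or_conj_pair M with ⟨x, y, z, h⟩ | ⟨w, r, hw, h⟩
  · obtain ⟨htr', hadj', hdet'⟩ := trace_adjugate_trace_det_of_eigs_eq h
    norm_cast at htr' hadj' hdet'
    rw [htr', hadj', hdet'] at hF
    rw [htr'] at htr
    rw [hadj'] at hadj
    exact absurd (add_mul_add_mul_add_nonpos htr hadj) (by linarith)
  refine ⟨w, by simp [h], hw, ?_⟩
  rw [trace_mul_adjugate_trace_sub_det_of_eigs_eq_conj_pair h] at hF
  nlinarith [Complex.normSq_nonneg (w + r)]

end Eigenvalues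

theorem trace_Jmat (J : Matrix (Fin 3) (Fin 3) ℝ) (d₁ d₂ d₃ y : ℝ) :
    (Jmat J d₁ d₂ d₃ y).trace = J.trace - (d₁ + d₂ + d₃) * y := by
  simp [Jmat, Fin.sum_univ_three]
  ring

theorem exists_adjugate_trace_Jmat_eq (J : Matrix (Fin 3) (Fin 3) ℝ) (d₁ d₂ d₃ : ℝ) :
    ∃ b₁, ∀ y, (Jmat J d₁ d₂ d₃ y).adjugate.trace =
      J.adjugate.trace + b₁ * y + (d₁ * d₂ + d₁ * d₃ + d₂ * d₃) * y ^ 2 := by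
  refine ⟨-(J 0 0 * (d₂ + d₃) + J 1 1 * (d₁ + d₃) + J 2 2 * (d₁ + d₂)), fun y => ?_⟩
  simp [Jmat, Matrix.trace_fin_three, Matrix.adjugate_fin_three]
  ring

theorem exists_det_Jmat_eq (J : Matrix (Fin 3) (Fin 3) ℝ) (d₁ d₂ d₃ : ℝ) :
    ∃ a₁ a₂, ∀ y, (Jmat J d₁ d₂ d₃ y).det =
      J.det + a₁ * y + a₂ * y ^ 2 + -(d₁ * d₂ * d₃) * y ^ 3 := by
  refine ⟨-(J 0 0 * J 1 1 * d₃ + J 0 0 * J 2 2 * d₂ + J 1 1 * J 2 2 * d₁)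
      + J 1 2 * J 2 1 * d₁ + J 0 1 * J 1 0 * d₃ + J 0 2 * J 2 0 * d₂,
    J 0 0 * d₂ * d₃ + J 1 1 * d₁ * d₃ + J 2 2 * d₁ * d₂, fun y => ?_⟩
  simp [Jmat, Matrix.det_fin_three]
  ring

theorem continuous_Jmat (J : Matrix (Fin 3) (Fin 3) ℝ) (d₁ d₂ d₃ : ℝ) :
    Continuous (Jmat J d₁ d₂ d₃) :=
  continuous_const.sub (continuous_id.smul continuous_const)

theorem turingHopf_iff_trace_adjugate_condition
    (J : Matrix (Fin 3) (Fin 3) ℝ) (d₁ d₂ d₃ : ℝ)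
    (hd₁ : 0 < d₁) (hd₂ : 0 < d₂) (hd₃ : 0 < d₃)
    (hJ : ∀ z ∈ eigs J, z.re < 0) :
    (∃ y > (0 : ℝ), ∃ z ∈ eigs (Jmat J d₁ d₂ d₃ y), z.im ≠ 0 ∧ 0 < z.re) ↔
      (∃ y'' > (0 : ℝ),
        0 < (Jmat J d₁ d₂ d₃ y'').adjugate.trace ∧
        0 < (Jmat J d₁ d₂ d₃ y'').trace * (Jmat J d₁ d₂ d₃ y'').adjugate.trace
              - (Jmat J d₁ d₂ d₃ y'').det) := by
  obtain ⟨htrJ, hadjJ, hdetJ⟩ := trace_neg_and_adjugate_trace_pos_and_det_neg hJ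
  have htr : ∀ y > (0 : ℝ), (Jmat J d₁ d₂ d₃ y).trace < 0 := fun y hy => by
    rw [trace_Jmat]; nlinarith
  constructor
  · rintro ⟨y₀, hy₀, z, hz, hzim, hzre⟩
    obtain ⟨hdet, hF⟩ :=
      det_neg_and_trace_mul_adjugate_trace_sub_det_pos (htr y₀ hy₀) hz hzim hzre
    by_cases hadj : 0 < (Jmat J d₁ d₂ d₃ y₀).adjugate.trace
    · exact ⟨y₀, hy₀, hadj, hF⟩
    obtain ⟨b₁, hA⟩ := exists_adjugate_trace_Jmat_eq J d₁ d₂ d₃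
    obtain ⟨a₁, a₂, hD⟩ := exists_det_Jmat_eq J d₁ d₂ d₃
    exact exists_pos_and_mul_sub_pos_of_quadratic_cubic
      (continuous_Jmat J d₁ d₂ d₃).matrix_trace hA (by positivity) hadjJ hD
      (by nlinarith [mul_pos (mul_pos hd₁ hd₂) hd₃]) hdetJ hy₀ (not_lt.1 hadj) hdet
  · rintro ⟨y, hy, hadj, hF⟩
    exact ⟨y, hy, exists_mem_eigs_im_ne_zero_re_pos (htr y hy) hadj hF⟩
end
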